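/- The n-th Legendre polynomial satisfies the self-adjoint differential equation [(1 - x^2) P_n'(x)]' + n(n+1) P_n(x) = 0 for all x in (-1, 1). -/

import Mathlib

open Real

/-- The `n`-th Legendre polynomial, defined by Rodrigues' formula. -/
noncomputable def legendreP (n : ℕ) : ℝ → ℝ :=
  fun x => (1 / (2 ^ n * (Nat.factorial n : ℝ))) *
    iteratedDeriv n (fun y : ℝ => (y ^ 2 - 1) ^ n) x

/-!
The polynomial `u = (X ^ 2 - 1) ^ n` satisfies `(X ^ 2 - 1) * u' = 2 n X u`. Differentiating this
`n + 1` times with the Leibniz rule turns it into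
`(X ^ 2 - 1) y'' + 2 X y' - n (n + 1) y = 0` for `y = u⁽ⁿ⁾`, which is Legendre's equation
`((1 - X ^ 2) y')' + n (n + 1) y = 0`.
-/

open Polynomial

namespace Polynomial

section CommRing

variable {R : Type*} [CommRing R]

theorem iterate_derivative_succ_X_mul (p : R[X]) (k : ℕ) :
    derivative^[k + 1] (X * p) = X * derivative^[k + 1] p + (k + 1 : R[X]) * derivative^[k] p := by
  rw [mul_comm X, iterate_derivative_mul_X, Nat.add_sub_cancel, nsmul_eq_mul]
  push_cast
  ring

theorem iterate_derivative_succ_X_sq_sub_one_mul_derivative (p : R[X]) (k : ℕ) :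
    derivative^[k + 1] ((X ^ 2 - 1) * derivative p) =
      (X ^ 2 - 1) * derivative^[k + 2] p + 2 * (k + 1 : R[X]) * X * derivative^[k + 1] p
        + (k * (k + 1) : R[X]) * derivative^[k] p := by
  have hsq : (X ^ 2 - 1) * derivative p = derivative p * X * X - derivative p := by ring
  rw [hsq, iterate_derivative_sub, iterate_derivative_mul_X, Nat.add_sub_cancel,
    iterate_derivative_derivative_mul_X, iterate_derivative_derivative_mul_X,
    ← Function.iterate_succ_apply]
  simp only [nsmul_eq_mul, Nat.succ_eq_add_one]
  push_cast
  ring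

theorem X_sq_sub_one_mul_derivative_pow (n : ℕ) :
    (X ^ 2 - 1 : R[X]) * derivative ((X ^ 2 - 1) ^ n) = (2 * n) • (X * (X ^ 2 - 1) ^ n) := by
  cases n with
  | zero => simp
  | succ n =>
    rw [derivative_pow_succ, derivative_sub, derivative_X_pow, derivative_one]
    simp only [map_add, map_natCast, map_one]
    rw [nsmul_eq_mul]
    push_cast
    ring

variable (R) in
/-- Up to the factor `2 ^ n * n !`, the `n`-th Legendre polynomial. -/
noncomputable def rodrigues (n : ℕ) : R[X] :=
  derivative^[n] ((X ^ 2 - 1) ^ n)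

theorem legendre_equation_rodrigues (n : ℕ) :
    derivative ((1 - X ^ 2) * derivative (rodrigues R n)) + (n * (n + 1) : R[X]) * rodrigues R n
      = 0 := by
  have h := congrArg (derivative^[n + 1]) (X_sq_sub_one_mul_derivative_pow (R := R) n)
  rw [iterate_derivative_succ_X_sq_sub_one_mul_derivative, iterate_derivative_smul,
    iterate_derivative_succ_X_mul, nsmul_eq_mul] at h
  rw [rodrigues, derivative_mul, ← Function.iterate_succ_apply' derivative,
    ← Function.iterate_succ_apply' derivative]
  simp only [derivative_sub, derivative_one, derivative_X_sq, map_ofNat, Nat.succ_eq_add_one]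
  push_cast at h
  linear_combination -h

end CommRing

section Calculus

variable {𝕜 : Type*} [NontriviallyNormedField 𝕜]

theorem iteratedDeriv_eval (p : 𝕜[X]) (k : ℕ) :
    iteratedDeriv k (fun x => p.eval x) = fun x => (derivative^[k] p).eval x := by
  induction k with
  | zero => simp
  | succ k ih =>
    ext x
    rw [iteratedDeriv_succ, ih, Function.iterate_succ_apply', Polynomial.deriv]

theorem deriv_one_sub_sq_mul_deriv_eval (p : 𝕜[X]) (x : 𝕜) :
    deriv (fun y => (1 - y ^ 2) * deriv (fun z => p.eval z) y) x
      = (derivative ((1 - X ^ 2) * derivative p)).eval x := by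
  have h : (fun y => (1 - y ^ 2) * deriv (fun z => p.eval z) y)
      = fun y => ((1 - X ^ 2) * derivative p).eval y := by
    ext y
    simp only [Polynomial.deriv, eval_mul, eval_sub, eval_one, eval_pow, eval_X]
  rw [h, Polynomial.deriv]

end Calculus

end Polynomial

theorem legendreP_eq_eval (n : ℕ) :
    legendreP n = fun x => (C (1 / (2 ^ n * (n.factorial : ℝ))) * rodrigues ℝ n).eval x := by
  ext x
  have h : (fun y : ℝ => (y ^ 2 - 1) ^ n) = fun y => ((X ^ 2 - 1 : ℝ[X]) ^ n).eval y := by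
    ext y
    simp
  rw [legendreP, h, iteratedDeriv_eval, eval_mul, eval_C, rodrigues]

theorem legendre_self_adjoint_ODE_general (n : ℕ) (x : ℝ) :
    deriv (fun y : ℝ => (1 - y ^ 2) * deriv (legendreP n) y) x
      + (n : ℝ) * ((n : ℝ) + 1) * legendreP n x = 0 := by
  set c : ℝ := 1 / (2 ^ n * (n.factorial : ℝ))
  have hode : derivative ((1 - X ^ 2) * derivative (C c * rodrigues ℝ n))
      + (n * (n + 1) : ℝ[X]) * (C c * rodrigues ℝ n) = 0 := by
    rw [derivative_C_mul, mul_left_comm, derivative_C_mul]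
    linear_combination C c * legendre_equation_rodrigues (R := ℝ) n
  rw [legendreP_eq_eval, deriv_one_sub_sq_mul_deriv_eval]
  simpa only [eval_add, eval_mul, eval_natCast, eval_one, eval_zero] using congrArg (eval x) hode

theorem legendre_self_adjoint_ODE (n : ℕ) (x : ℝ) (hx : x ∈ Set.Ioo (-1 : ℝ) 1) :
    deriv (fun y : ℝ => (1 - y ^ 2) * deriv (legendreP n) y) x
      + (n : ℝ) * ((n : ℝ) + 1) * legendreP n x = 0 :=
  legendre_self_adjoint_ODE_general n x
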